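/- arXiv:1107.3549 — 5 statements merged into one kernel-verified Lean document; each statement's English description precedes it below -/
import Mathlib

section
/- Let p be a prime and n ≥ 2. For every index 1 ≤ i ≤ n−1 and every t ∈ 1 + pℤ_p, the diagonal matrix h_{i,i+1}(t) ∈ SL_n(ℤ_p), whose diagonal entries are 1 except for the entry t in position (i,i) and the entry t^{−1} in position (i+1,i+1), belongs to the subgroup K_*(p). -/
/-!
Write `e_ij(c)` for the transvection `1 + c·E_ij`. For `i ≠ j` and `u v` with `u * v = 1`,

  `e_ji((1 - u) v) · e_ij(1) · e_ji(u - 1) · e_ij(-v) = h_ij(u)`,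

a direct computation in the `2 × 2` block on `{i, j}`. For `i < j` the upper factors lie in
`K_*(p)` unconditionally, and the lower ones need their coefficients divisible by `p ^ (j - i)`;
both coefficients are multiples of `u - 1`, which for `j = i + 1` is the hypothesis `t ∈ 1 + pℤ_p`.
-/

open Matrix

/-- The subgroup `K_*(p)` of `SL_n(ℤ_p)` generated by the elementary matrices
`e_ij(t) = 1 + t·E_ij` with `t ∈ ℤ_p` for `i < j` and `t ∈ p^(i-j)·ℤ_p` for `i > j`. -/
noncomputable def Kstar (p : ℕ) [Fact p.Prime] (n : ℕ) :
    Subgroup (Matrix.SpecialLinearGroup (Fin n) ℤ_[p]) :=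
  Subgroup.closure
    { g | ∃ (i j : Fin n) (t : ℤ_[p]),
        (g : Matrix (Fin n) (Fin n) ℤ_[p]) = Matrix.transvection i j t ∧
        (i < j ∨ (j < i ∧ (p : ℤ_[p]) ^ ((i : ℕ) - (j : ℕ)) ∣ t)) }

theorem Matrix.transvection_mul_transvection_mul_transvection_mul_transvection
    {ι R : Type*} [DecidableEq ι] [Fintype ι] [CommRing R] {i j : ι} (hij : i ≠ j)
    {u v : R} (huv : u * v = 1) :
    transvection j i ((1 - u) * v) * transvection i j 1 * transvection j i (u - 1) *
        transvection i j (-v) =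
      diagonal (fun k => if k = i then u else if k = j then v else 1) := by
  ext k l
  simp only [transvection, add_mul, mul_add, one_mul, mul_one, single_mul_single_same,
    single_mul_single_of_ne _ _ _ _ hij, single_mul_single_of_ne _ _ _ _ hij.symm]
  simp only [Matrix.add_apply, single_apply, diagonal_apply, one_apply, Matrix.zero_apply,
    zero_mul]
  grind

namespace Kstar

variable {p : ℕ} [Fact p.Prime] {n : ℕ} {i j : Fin n}

theorem transvection_mem_of_lt (hij : i < j) (c : ℤ_[p]) :
    SpecialLinearGroup.transvection hij.ne c ∈ Kstar p n :=
  Subgroup.subset_closure ⟨i, j, c, rfl, .inl hij⟩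

theorem transvection_mem_of_gt (hji : j < i) {c : ℤ_[p]}
    (hc : (p : ℤ_[p]) ^ ((i : ℕ) - (j : ℕ)) ∣ c) :
    SpecialLinearGroup.transvection hji.ne' c ∈ Kstar p n :=
  Subgroup.subset_closure ⟨i, j, c, rfl, .inr ⟨hji, hc⟩⟩

theorem diagonal_mem_of_lt (hij : i < j) {u v : ℤ_[p]} (huv : u * v = 1)
    (hu : (p : ℤ_[p]) ^ ((j : ℕ) - (i : ℕ)) ∣ u - 1) {γ : SpecialLinearGroup (Fin n) ℤ_[p]}
    (hγ : (γ : Matrix (Fin n) (Fin n) ℤ_[p]) =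
      diagonal (fun k => if k = i then u else if k = j then v else 1)) :
    γ ∈ Kstar p n := by
  have hγ_eq : γ = SpecialLinearGroup.transvection hij.ne' ((1 - u) * v) *
      SpecialLinearGroup.transvection hij.ne 1 * SpecialLinearGroup.transvection hij.ne' (u - 1) *
        SpecialLinearGroup.transvection hij.ne (-v) :=
    Subtype.ext <| hγ.trans
      (transvection_mul_transvection_mul_transvection_mul_transvection hij.ne huv).symm
  rw [hγ_eq]
  refine mul_mem (mul_mem (mul_mem ?_ ?_) ?_) ?_
  · exact transvection_mem_of_gt hij ((dvd_sub_comm.mp hu).mul_right v)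
  · exact transvection_mem_of_lt hij 1
  · exact transvection_mem_of_gt hij hu
  · exact transvection_mem_of_lt hij (-v)

end Kstar

theorem diagonal_mem_Kstar_general (p : ℕ) [Fact p.Prime] (n : ℕ)
    (i : Fin n) (hi : (i : ℕ) + 1 < n) (t : ℤ_[p]ˣ) (ht : (p : ℤ_[p]) ∣ ((t : ℤ_[p]) - 1))
    (γ : Matrix.SpecialLinearGroup (Fin n) ℤ_[p])
    (hγ : (γ : Matrix (Fin n) (Fin n) ℤ_[p]) =
      Matrix.diagonal (fun k : Fin n =>
        if k = i then (t : ℤ_[p])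
        else if (k : ℕ) = (i : ℕ) + 1 then ((t⁻¹ : ℤ_[p]ˣ) : ℤ_[p]) else 1)) :
    γ ∈ Kstar p n := by
  let j : Fin n := ⟨i + 1, hi⟩
  refine Kstar.diagonal_mem_of_lt (j := j) (Nat.lt_succ_self i) t.mul_inv
    (by simpa [j] using ht) (hγ.trans ?_)
  simp only [j, Fin.ext_iff]

/-- For every `1 ≤ i ≤ n-1` and every unit `t ∈ 1 + pℤ_p`, the diagonal matrix
`h_{i,i+1}(t)` with diagonal entries `1` except for `t` at position `(i,i)` and `t⁻¹` at
position `(i+1,i+1)` belongs to `K_*(p)`. -/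
theorem diagonal_mem_Kstar (p : ℕ) [Fact p.Prime] (n : ℕ) (hn : 2 ≤ n)
    (i : Fin n) (hi : (i : ℕ) + 1 < n) (t : ℤ_[p]ˣ) (ht : (p : ℤ_[p]) ∣ ((t : ℤ_[p]) - 1))
    (γ : Matrix.SpecialLinearGroup (Fin n) ℤ_[p])
    (hγ : (γ : Matrix (Fin n) (Fin n) ℤ_[p]) =
      Matrix.diagonal (fun k : Fin n =>
        if k = i then (t : ℤ_[p])
        else if (k : ℕ) = (i : ℕ) + 1 then ((t⁻¹ : ℤ_[p]ˣ) : ℤ_[p]) else 1)) :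
    γ ∈ Kstar p n :=
  diagonal_mem_Kstar_general p n i hi t ht γ hγ
end

section
/- Let m ∈ ℤ_p[X] be a monic polynomial of degree d and write m(X) = ∏_{i=1}^d (X − μ_i) over an algebraic closure K of ℚ_p. For any α ∈ ℚ, the polynomial m_α(X) = ∏_{i : v_p(μ_i) ≠ α} (X − μ_i) has all of its coefficients in ℤ_p; that is, m_α lies in ℤ_p[X] (in particular its coefficients lie in ℚ_p). -/
/-! The roots of `m` form a multiset that is stable under `Gal(K/ℚ_p)`, and `v_p` is Galois
invariant, so the roots of valuation `≠ α` are permuted among themselves. Hence `m_α` is fixed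
coefficientwise by the Galois group, so its coefficients lie in `ℚ_p`. Being a monic factor of the
monic integral polynomial `m`, it has coefficients integral over `ℤ_p`, and `ℤ_p` is integrally
closed. -/

open Polynomial
open scoped Classical

/-- The `p`-adic valuation (normalized by `v_p(p) = 1`) on the algebraic closure of
`ℚ_p`, extending the valuation of `ℚ_p`: for `x ≠ 0` algebraic over `ℚ_p` with minimal
polynomial `f` of degree `n`, `v_p(x) = v_p(f(0))/n`; and `v_p(0) = ⊤`. -/
noncomputable def padicValExt (p : ℕ) [Fact p.Prime] (x : AlgebraicClosure ℚ_[p]) :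
    WithTop ℚ :=
  if x = 0 then ⊤
  else ((((minpoly ℚ_[p] x).coeff 0).valuation : ℚ) /
          ((minpoly ℚ_[p] x).natDegree : ℚ) : ℚ)

section GaloisDescent

variable {R F E : Type*} [CommRing R] [Field F] [Field E] [Algebra F E]

theorem Multiset.map_algEquiv_eq_of_prod_X_sub_C_eq_map {f : F[X]} {s : Multiset E}
    (hs : f.map (algebraMap F E) = (s.map (X - C ·)).prod) (σ : E ≃ₐ[F] E) : s.map σ = s := by
  have hσ : ((s.map σ).map (X - C ·)).prod = (s.map (X - C ·)).prod :=
    calc ((s.map σ).map (X - C ·)).prod = (s.map (X - C ·)).prod.map (σ : E →+* E) := by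
          simp [Polynomial.map_multiset_prod, Multiset.map_map]
      _ = (f.map (algebraMap F E)).map (σ : E →+* E) := by rw [hs]
      _ = f.map (algebraMap F E) := by
          rw [Polynomial.map_map]
          exact congrArg (f.map ·) σ.toAlgHom.comp_algebraMap
      _ = (s.map (X - C ·)).prod := hs
  simpa only [roots_multiset_prod_X_sub_C] using congrArg roots hσ

theorem Polynomial.map_multiset_prod_X_sub_C_filter {A : Type*} [CommRing A] (σ : A →+* A)
    {s : Multiset A} (hs : s.map σ = s) (P : A → Prop) [DecidablePred P]
    (hP : ∀ x, P (σ x) ↔ P x) :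
    ((s.filter P).map (X - C ·)).prod.map σ = ((s.filter P).map (X - C ·)).prod := by
  have hfilter : (s.filter P).map σ = s.filter P := by
    conv_rhs => rw [← hs, Multiset.filter_map]
    exact congrArg _ (Multiset.filter_congr fun x _ => (hP x).symm)
  conv_rhs => rw [← hfilter]
  simp [Polynomial.map_multiset_prod, Multiset.map_map]

theorem Polynomial.mem_lifts_of_dvd_of_forall_map_algEquiv_eq [IsDomain R] [IsIntegrallyClosed R]
    [Algebra R F] [IsFractionRing R F] [Algebra R E] [IsScalarTower R F E] [IsGalois F E]
    {m : R[X]} (hm : m.Monic) {q : E[X]} (hq : q.Monic) (hdvd : q ∣ m.map (algebraMap R E))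
    (hfix : ∀ σ : E ≃ₐ[F] E, q.map (σ : E →+* E) = q) : q ∈ lifts (algebraMap R E) := by
  refine (lifts_iff_coeff_lifts q).mpr fun n => ?_
  obtain ⟨b, hb⟩ := (InfiniteGalois.mem_range_algebraMap_iff_fixed (q.coeff n)).mpr fun σ => by
    conv_rhs => rw [← hfix σ, coeff_map]
    rfl
  have hb_int : IsIntegral R b := by
    rw [← isIntegral_algebraMap_iff (algebraMap F E).injective, hb]
    exact isIntegral_coeff_of_dvd m q hm hq hdvd n
  obtain ⟨a, rfl⟩ := IsIntegrallyClosed.isIntegral_iff.mp hb_int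
  exact ⟨a, by rw [IsScalarTower.algebraMap_apply R F E, hb]⟩

theorem Polynomial.multiset_prod_X_sub_C_filter_mem_lifts [IsDomain R] [IsIntegrallyClosed R]
    [Algebra R F] [IsFractionRing R F] [Algebra R E] [IsScalarTower R F E] [IsGalois F E]
    {m : R[X]} (hm : m.Monic) {s : Multiset E}
    (hs : m.map (algebraMap R E) = (s.map (X - C ·)).prod)
    (P : E → Prop) [DecidablePred P] (hP : ∀ (σ : E ≃ₐ[F] E) x, P (σ x) ↔ P x) :
    ((s.filter P).map (X - C ·)).prod ∈ lifts (algebraMap R E) := by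
  have hs_F : (m.map (algebraMap R F)).map (algebraMap F E) = (s.map (X - C ·)).prod := by
    rw [Polynomial.map_map, ← IsScalarTower.algebraMap_eq, hs]
  refine mem_lifts_of_dvd_of_forall_map_algEquiv_eq (F := F) hm
    (monic_multiset_prod_of_monic _ _ fun a _ => monic_X_sub_C a) ?_ fun σ =>
      map_multiset_prod_X_sub_C_filter σ (s.map_algEquiv_eq_of_prod_X_sub_C_eq_map hs_F σ) P (hP σ)
  rw [hs]
  exact Multiset.prod_dvd_prod_of_le (Multiset.map_le_map (Multiset.filter_le P s))

end GaloisDescent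

theorem padicValExt_algEquiv_apply (p : ℕ) [Fact p.Prime]
    (σ : AlgebraicClosure ℚ_[p] ≃ₐ[ℚ_[p]] AlgebraicClosure ℚ_[p]) (x : AlgebraicClosure ℚ_[p]) :
    padicValExt p (σ x) = padicValExt p x := by
  simp [padicValExt, minpoly.algEquiv_eq]

theorem slope_factor_mem_padicInt_general (p : ℕ) [Fact p.Prime] (d : ℕ)
    (m : Polynomial ℤ_[p]) (hm : m.Monic)
    (μ : Fin d → AlgebraicClosure ℚ_[p])
    (hroots : m.map ((algebraMap ℚ_[p] (AlgebraicClosure ℚ_[p])).comp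
        (algebraMap ℤ_[p] ℚ_[p])) = ∏ i, (X - C (μ i)))
    (α : ℚ) :
    ∃ q : Polynomial ℤ_[p],
      q.map ((algebraMap ℚ_[p] (AlgebraicClosure ℚ_[p])).comp (algebraMap ℤ_[p] ℚ_[p])) =
        ∏ i ∈ Finset.univ.filter (fun i => padicValExt p (μ i) ≠ (α : WithTop ℚ)),
          (X - C (μ i)) := by
  rw [← IsScalarTower.algebraMap_eq] at hroots ⊢
  have hs : m.map (algebraMap ℤ_[p] _) = ((Finset.univ.val.map μ).map (X - C ·)).prod := by
    rw [hroots, Finset.prod_eq_multiset_prod, Multiset.map_map]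
    rfl
  -- `K/ℚ_p` is Galois (`IsAlgClosure.isGalois`) since `ℚ_p` has characteristic zero.
  have hlifts := multiset_prod_X_sub_C_filter_mem_lifts (F := ℚ_[p]) hm hs
    (fun x => padicValExt p x ≠ α) fun σ x => by rw [padicValExt_algEquiv_apply]
  rw [Multiset.filter_map, Multiset.map_map] at hlifts
  rw [Finset.prod_eq_multiset_prod, Finset.filter_val]
  exact hlifts

/-- Let `m ∈ ℤ_p[X]` be monic of degree `d` with roots `μ_1, …, μ_d` in an algebraic
closure of `ℚ_p`. For any `α ∈ ℚ`, the polynomial `m_α(X) = ∏_{v_p(μ_i) ≠ α} (X - μ_i)`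
has all its coefficients in `ℤ_p`. -/
theorem slope_factor_mem_padicInt (p : ℕ) [Fact p.Prime] (d : ℕ)
    (m : Polynomial ℤ_[p]) (hm : m.Monic) (hd : m.natDegree = d)
    (μ : Fin d → AlgebraicClosure ℚ_[p])
    (hroots : m.map ((algebraMap ℚ_[p] (AlgebraicClosure ℚ_[p])).comp
        (algebraMap ℤ_[p] ℚ_[p])) = ∏ i, (X - C (μ i)))
    (α : ℚ) :
    ∃ q : Polynomial ℤ_[p],
      q.map ((algebraMap ℚ_[p] (AlgebraicClosure ℚ_[p])).comp (algebraMap ℤ_[p] ℚ_[p])) =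
        ∏ i ∈ Finset.univ.filter (fun i => padicValExt p (μ i) ≠ (α : WithTop ℚ)),
          (X - C (μ i)) :=
  slope_factor_mem_padicInt_general p d m hm μ hroots α
end

section
/- Let p be a prime, let r ≥ 1 be an integer and let k be an integer with 0 ≤ k < r. If a, a' ∈ ℤ satisfy a ≡ a' (mod p^{⌈(p/(p−1))·r⌉}), then C(a, k) ≡ C(a', k) (mod p^r). -/
/-!
Since `k! · C(z, k) = z(z-1)⋯(z-k+1)` is an integer polynomial in `z`, a congruence
`a ≡ a' (mod p^M)` with `M = ⌈p r / (p - 1)⌉` gives `k! · C(a, k) ≡ k! · C(a', k) (mod p^M)`,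
and cancelling `k!` loses exactly `v = v_p(k!)` powers of `p`. By Legendre's formula
`(p - 1) v ≤ k < r`, hence `r + v ≤ p r / (p - 1) ≤ M`.
-/

open Nat

theorem Int.pow_dvd_of_pow_add_padicValNat_dvd_mul {p : ℕ} [Fact p.Prime] {n r : ℕ}
    (hn : n ≠ 0) {d : ℤ} (h : (p : ℤ) ^ (r + padicValNat p n) ∣ n * d) : (p : ℤ) ^ r ∣ d := by
  rcases eq_or_ne d 0 with rfl | hd
  · exact dvd_zero _
  have hn' : (n : ℤ) ≠ 0 := Int.natCast_ne_zero.mpr hn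
  have hv := (padicValInt_dvd_iff _ _).mp h |>.resolve_left (mul_ne_zero hn' hd)
  rw [padicValInt.mul hn' hd, padicValInt.of_nat] at hv
  exact (padicValInt_dvd_iff _ _).mpr (.inr (by omega))

theorem Int.ModEq.factorial_mul_choose {n a b : ℤ} (h : a ≡ b [ZMOD n]) (k : ℕ) :
    k ! * Ring.choose a k ≡ k ! * Ring.choose b k [ZMOD n] := by
  have h_eval (z : ℤ) : (descPochhammer ℤ k).eval z = k ! * Ring.choose z k := by
    rw [Polynomial.eval_eq_smeval, Ring.descPochhammer_eq_factorial_smul_choose, nsmul_eq_mul]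
  rw [← h_eval, ← h_eval]
  exact Int.modEq_iff_dvd.mpr (h.dvd.trans (Polynomial.sub_dvd_eval_sub b a _))

theorem Int.choose_modEq_choose_of_modEq_pow_add_padicValNat {p : ℕ} [Fact p.Prime] {r k : ℕ}
    {a b : ℤ} (h : a ≡ b [ZMOD (p : ℤ) ^ (r + padicValNat p k !)]) :
    Ring.choose a k ≡ Ring.choose b k [ZMOD (p : ℤ) ^ r] := by
  refine Int.modEq_iff_dvd.mpr
    (Int.pow_dvd_of_pow_add_padicValNat_dvd_mul (factorial_ne_zero k) ?_)
  rw [mul_sub]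
  exact (h.factorial_mul_choose k).dvd

theorem sub_one_mul_padicValNat_factorial_le (p : ℕ) [Fact p.Prime] (k : ℕ) :
    (p - 1) * padicValNat p k ! ≤ k :=
  sub_one_mul_padicValNat_factorial (p := p) k ▸ Nat.sub_le _ _

theorem add_le_toNat_ceil_div_sub_one_mul {p r v : ℕ} (hp : 2 ≤ p) (hv : (p - 1) * v ≤ r) :
    r + v ≤ (⌈(p : ℚ) / (p - 1) * r⌉).toNat := by
  have hp1 : (0 : ℚ) < p - 1 := by
    have : (2 : ℚ) ≤ p := by exact_mod_cast hp
    linarith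
  have hvq : ((p : ℚ) - 1) * v ≤ r := by
    have := (Nat.cast_le (α := ℚ)).mpr hv
    rwa [Nat.cast_mul, Nat.cast_sub (by omega), Nat.cast_one] at this
  have hq : ((r + v : ℕ) : ℚ) ≤ (p : ℚ) / (p - 1) * r := by
    rw [div_mul_eq_mul_div, le_div_iff₀ hp1]
    push_cast
    linarith
  rw [Int.le_toNat (Int.ceil_nonneg ((Nat.cast_nonneg _).trans hq))]
  exact_mod_cast hq.trans (Int.le_ceil _)

theorem choose_modEq_of_modEq_general (p : ℕ) (hp : p.Prime) (r : ℕ)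
    (k : ℕ) (hk : k < r) (a a' : ℤ)
    (h : a ≡ a' [ZMOD (p : ℤ) ^ (⌈((p : ℚ) / ((p : ℚ) - 1)) * (r : ℚ)⌉).toNat]) :
    Ring.choose a k ≡ Ring.choose a' k [ZMOD (p : ℤ) ^ r] := by
  have : Fact p.Prime := ⟨hp⟩
  have h_legendre := sub_one_mul_padicValNat_factorial_le p k
  have h_exponent := add_le_toNat_ceil_div_sub_one_mul hp.two_le (h_legendre.trans hk.le)
  exact Int.choose_modEq_choose_of_modEq_pow_add_padicValNat
    (h.of_dvd (pow_dvd_pow _ h_exponent))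

/-- Let `p` be a prime, `r ≥ 1` and `0 ≤ k < r`. If `a ≡ a' (mod p^⌈(p/(p-1))·r⌉)` then
`C(a,k) ≡ C(a',k) (mod p^r)`, where `C(z,k) = z(z-1)⋯(z-k+1)/k!` is the integer-valued
binomial coefficient. -/
theorem choose_modEq_of_modEq (p : ℕ) (hp : p.Prime) (r : ℕ) (hr : 1 ≤ r)
    (k : ℕ) (hk : k < r) (a a' : ℤ)
    (h : a ≡ a' [ZMOD (p : ℤ) ^ (⌈((p : ℚ) / ((p : ℚ) - 1)) * (r : ℚ)⌉).toNat]) :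
    Ring.choose a k ≡ Ring.choose a' k [ZMOD (p : ℤ) ^ r] :=
  choose_modEq_of_modEq_general p hp r k hk a a' h
end

section
/- For every positive root α ∈ Φ⁺ and every multi-index n = (n_1, …, n_s) ∈ ℕ^s, the element x_α · X₋^{·n} of the universal enveloping algebra 𝒰 lies in the ℂ-linear span of the elements X₋^{·a} · X₊^{·b} with a, b ∈ ℕ^s, together with the elements X₋^{·a} · h_γ with a ∈ ℕ^s and γ ∈ Φ⁺ (h_γ the coroot of γ). -/
open LieAlgebra LieModule

/-!
Write `Y(w)` for the product of the `y_i` along a word `w` of indices, so that `X₋^{·n}` is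
`Y(w)` for the sorted word `w` with `n_i` letters `i`, and let `S` be the span in the statement.
One shows that `Y(a) z Y(c) ∈ S` for every `z ∈ 𝔤` and all words `a`, `c` with `a ++ c` sorted,
by induction on the length of `a ++ c`. Sliding `z` to the right end across a letter `j` of `c`
costs a commutator term `Y(a') [y_j, z] Y(c')` with `a' ++ c'` sorted and shorter, which is
covered by induction. This leaves `Y(w) z` with `w` sorted; by linearity, `z` is an element of
`𝔥`, a span of coroots `h_γ` with `γ ∈ Φ⁺` (giving `Y(w) h_γ ∈ S`), a multiple of some `x_k`
(giving `Y(w) X₊^{·e_k} ∈ S`), or a multiple of some `y_m`. In the last case `y_m` slides left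
to its sorted place in `w`, again at the cost of shorter commutator terms.
-/

namespace List

theorem count_flatMap_finRange_replicate {s : ℕ} (n : Fin s → ℕ) (j : Fin s) :
    ((finRange s).flatMap fun i => replicate (n i) i).count j = n j := by
  simp [count_flatMap, count_replicate, ← ofFn_eq_map, sum_ofFn]

theorem pairwise_le_flatMap_finRange_replicate {s : ℕ} (n : Fin s → ℕ) :
    ((finRange s).flatMap fun i => replicate (n i) i).Pairwise (· ≤ ·) := by
  simpa [pairwise_flatMap, pairwise_replicate] using
    (pairwise_lt_finRange s).imp fun h _ _ => h.le

theorem prod_map_finRange_pow {M : Type*} [Monoid M] {s : ℕ} (f : Fin s → M) (n : Fin s → ℕ) :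
    ((finRange s).map fun i => f i ^ n i).prod =
      (((finRange s).flatMap fun i => replicate (n i) i).map f).prod := by
  simp [prod_flatten, flatMap, Function.comp_def]

theorem Pairwise.eq_flatMap_finRange_replicate_count {s : ℕ} {l : List (Fin s)}
    (hl : l.Pairwise (· ≤ ·)) :
    l = (finRange s).flatMap fun i => replicate (l.count i) i :=
  Perm.eq_of_pairwise' hl (pairwise_le_flatMap_finRange_replicate _)
    (perm_iff_count.2 fun j => (count_flatMap_finRange_replicate (l.count ·) j).symm)

theorem Pairwise.prod_map_eq_prod_map_finRange_pow {M : Type*} [Monoid M] {s : ℕ}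
    {l : List (Fin s)} (hl : l.Pairwise (· ≤ ·)) (f : Fin s → M) :
    (l.map f).prod = ((finRange s).map fun i => f i ^ l.count i).prod := by
  rw [prod_map_finRange_pow, ← hl.eq_flatMap_finRange_replicate_count]

theorem prod_map_append_mul_mul_sub_mem {A α : Type*} [Ring A] (S : AddSubgroup A) (g : α → A)
    (z : A) (c : List α) :
    ∀ a b : List α, (∀ b₁ j b₂, b = b₁ ++ j :: b₂ →
      ((a ++ b₁).map g).prod * (g j * z - z * g j) * ((b₂ ++ c).map g).prod ∈ S) →
      ((a ++ b).map g).prod * z * (c.map g).prod -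
        (a.map g).prod * z * ((b ++ c).map g).prod ∈ S
  | a, [], _ => by simp
  | a, j :: b, h => by
    have hstep := h [] j b rfl
    have hrest := prod_map_append_mul_mul_sub_mem S g z c (a ++ [j]) b fun b₁ k b₂ hb =>
      by simpa using h (j :: b₁) k b₂ (by simp [hb])
    convert S.add_mem hrest hstep using 1
    simp only [append_assoc, cons_append, nil_append, map_append, prod_append, map_cons,
      prod_cons, map_nil, prod_nil, append_nil, mul_one]
    noncomm_ring

end List

namespace LieAlgebra.IsKilling

variable {K L : Type*} [Field K] [CharZero K] [LieRing L] [LieAlgebra K L]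
  [FiniteDimensional K L] [IsKilling K L] {H : LieSubalgebra K L} [H.IsCartanSubalgebra]
  [IsTriangularizable K H L]

theorem exists_smul_eq_of_mem_rootSpace {α : Weight K H L} (hα : α.IsNonZero) {v z : L}
    (hv : v ∈ rootSpace H α) (hv0 : v ≠ 0) (hz : z ∈ rootSpace H α) : ∃ c : K, c • v = z := by
  obtain ⟨c, hc⟩ := (finrank_eq_one_iff_of_nonzero' (⟨v, hv⟩ : rootSpace H α)
    (by simpa using hv0)).1 (finrank_rootSpace_eq_one α hα) ⟨z, hz⟩
  exact ⟨c, congrArg Subtype.val hc⟩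

theorem span_coroot_eq_top_of_forall_eq_or_eq_neg {s : ℕ} (rt : Fin s → Weight K H L)
    (hpos : ∀ w : Weight K H L, w.IsNonZero → (∃ i, ⇑w = ⇑(rt i)) ∨ (∃ i, ⇑w = -⇑(rt i))) :
    Submodule.span K (Set.range fun j => coroot (rt j)) = ⊤ := by
  rw [eq_top_iff, ← RootPairing.IsRootSystem.span_coroot_eq_top (P := rootSystem H),
    Submodule.span_le]
  rintro _ ⟨⟨α, hα⟩, rfl⟩
  rcases hpos α (by simpa [LieSubalgebra.root] using hα) with ⟨i, hi⟩ | ⟨i, hi⟩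
  · obtain rfl : α = rt i := DFunLike.coe_injective hi
    exact Submodule.subset_span ⟨i, rfl⟩
  · obtain rfl : α = -rt i := DFunLike.coe_injective (by simpa using hi)
    simpa using Submodule.neg_mem _ (Submodule.subset_span (Set.mem_range_self i) :
      coroot (rt i) ∈ Submodule.span K (Set.range fun j => coroot (rt j)))

end LieAlgebra.IsKilling

namespace UniversalEnvelopingAlgebra

section LieAlgebra

variable {R L : Type*} [CommRing R] [LieRing L] [LieAlgebra R L] {s : ℕ}

noncomputable def wordProd (R : Type*) [CommRing R] [LieAlgebra R L] (v : Fin s → L)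
    (l : List (Fin s)) : UniversalEnvelopingAlgebra R L :=
  (l.map fun i => ι R (v i)).prod

@[simp] theorem wordProd_nil (v : Fin s → L) : wordProd R v [] = 1 := rfl

@[simp] theorem wordProd_singleton (v : Fin s → L) (i : Fin s) :
    wordProd R v [i] = ι R (v i) := by
  simp [wordProd]

theorem ι_mul_ι_sub_ι_mul_ι (a b : L) : ι R a * ι R b - ι R b * ι R a = ι R ⁅a, b⁆ := by
  let := LieRing.ofAssociativeRing (A := UniversalEnvelopingAlgebra R L)
  rw [LieHom.map_lie, Ring.lie_def]

def SortedSandwichesMem (S : Submodule R (UniversalEnvelopingAlgebra R L)) (v : Fin s → L)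
    (n : ℕ) : Prop :=
  ∀ a c : List (Fin s), (a ++ c).Pairwise (· ≤ ·) → (a ++ c).length < n →
    ∀ z : L, wordProd R v a * ι R z * wordProd R v c ∈ S

theorem SortedSandwichesMem.wordProd_append_mul_sub_mem
    {S : Submodule R (UniversalEnvelopingAlgebra R L)} {v : Fin s → L} {n : ℕ}
    (hS : SortedSandwichesMem S v n) {a b c : List (Fin s)}
    (hsort : (a ++ b ++ c).Pairwise (· ≤ ·)) (hlen : (a ++ b ++ c).length ≤ n) (z : L) :
    wordProd R v (a ++ b) * ι R z * wordProd R v c -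
      wordProd R v a * ι R z * wordProd R v (b ++ c) ∈ S := by
  refine List.prod_map_append_mul_mul_sub_mem S.toAddSubgroup _ _ c a b fun b₁ j b₂ hb => ?_
  subst hb
  rw [ι_mul_ι_sub_ι_mul_ι]
  refine hS (a ++ b₁) (b₂ ++ c) (hsort.sublist ?_) ?_ _
  · simp
  · simp only [List.length_append, List.length_cons] at hlen ⊢; omega

end LieAlgebra

section Killing

open LieAlgebra.IsKilling

variable {K L : Type*} [Field K] [LieRing L] [LieAlgebra K L] [FiniteDimensional K L]
  [IsKilling K L] {H : LieSubalgebra K L} [H.IsCartanSubalgebra] {s : ℕ}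

variable (rt : Fin s → Weight K H L) (x y : Fin s → L)

noncomputable def pbwSpan : Submodule K (UniversalEnvelopingAlgebra K L) :=
  Submodule.span K
    ({ u : UniversalEnvelopingAlgebra K L |
        ∃ a b : Fin s → ℕ,
          u = ((List.finRange s).map
                (fun i => (ι K (y i) : UniversalEnvelopingAlgebra K L) ^ a i)).prod *
              ((List.finRange s).map
                (fun i => (ι K (x i) : UniversalEnvelopingAlgebra K L) ^ b i)).prod } ∪
     { u : UniversalEnvelopingAlgebra K L |
        ∃ (a : Fin s → ℕ) (j : Fin s),
          u = ((List.finRange s).map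
                (fun i => (ι K (y i) : UniversalEnvelopingAlgebra K L) ^ a i)).prod *
              ι K ((coroot (rt j) : H) : L) })

variable {rt x y}

theorem wordProd_mul_wordProd_mem_pbwSpan {l l' : List (Fin s)} (hl : l.Pairwise (· ≤ ·))
    (hl' : l'.Pairwise (· ≤ ·)) : wordProd K y l * wordProd K x l' ∈ pbwSpan rt x y := by
  refine Submodule.subset_span (Or.inl ⟨(l.count ·), (l'.count ·), ?_⟩)
  rw [wordProd, wordProd, hl.prod_map_eq_prod_map_finRange_pow,
    hl'.prod_map_eq_prod_map_finRange_pow]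

theorem wordProd_mul_ι_coroot_mem_pbwSpan {l : List (Fin s)} (hl : l.Pairwise (· ≤ ·))
    (j : Fin s) : wordProd K y l * ι K ((coroot (rt j) : H) : L) ∈ pbwSpan rt x y := by
  refine Submodule.subset_span (Or.inr ⟨(l.count ·), j, ?_⟩)
  rw [wordProd, hl.prod_map_eq_prod_map_finRange_pow]

theorem SortedSandwichesMem.wordProd_mul_ι_letter_mem_pbwSpan
    {n : ℕ} (hS : SortedSandwichesMem (pbwSpan rt x y) y n) {l : List (Fin s)}
    (hl : l.Pairwise (· ≤ ·)) (hlen : l.length ≤ n) (m : Fin s) :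
    wordProd K y l * ι K (y m) ∈ pbwSpan rt x y := by
  set p : Fin s → Bool := fun b => ¬ m ≤ b
  have hsplit := l.takeWhile_append_dropWhile (p := p)
  have hslide := hS.wordProd_append_mul_sub_mem (a := l.takeWhile p) (b := l.dropWhile p)
    (c := []) (by simpa [hsplit] using hl) (by simpa [hsplit] using hlen) (y m)
  rw [hsplit, wordProd_nil, mul_one, List.append_nil] at hslide
  have hinsert : wordProd K y (l.takeWhile p) * ι K (y m) * wordProd K y (l.dropWhile p) =
      wordProd K y (l.orderedInsert (· ≤ ·) m) := by
    simp [List.orderedInsert_eq_take_drop, wordProd, p, mul_assoc]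
  have hsorted := wordProd_mul_wordProd_mem_pbwSpan (rt := rt) (x := x) (y := y)
    (hl.orderedInsert m l) List.Pairwise.nil
  rw [wordProd_nil, mul_one, ← hinsert] at hsorted
  simpa only [sub_add_cancel] using add_mem hslide hsorted

variable [CharZero K] [IsTriangularizable K H L]

theorem wordProd_mul_ι_cartan_mem_pbwSpan
    (hpos : ∀ w : Weight K H L, w.IsNonZero → (∃ i, ⇑w = ⇑(rt i)) ∨ (∃ i, ⇑w = -⇑(rt i)))
    {l : List (Fin s)} (hl : l.Pairwise (· ≤ ·)) (h : H) :
    wordProd K y l * ι K (h : L) ∈ pbwSpan rt x y := by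
  have hh : h ∈ Submodule.span K (Set.range fun j => coroot (rt j)) := by
    rw [span_coroot_eq_top_of_forall_eq_or_eq_neg rt hpos]; trivial
  induction hh using Submodule.span_induction with
  | mem _ hmem =>
    obtain ⟨j, rfl⟩ := hmem
    exact wordProd_mul_ι_coroot_mem_pbwSpan hl j
  | zero => simp
  | add _ _ _ _ h₁ h₂ => simpa [mul_add] using Submodule.add_mem _ h₁ h₂
  | smul c _ _ h₁ => simpa using Submodule.smul_mem _ c h₁

theorem SortedSandwichesMem.wordProd_mul_ι_mem_pbwSpan
    (hpos : ∀ w : Weight K H L, w.IsNonZero → (∃ i, ⇑w = ⇑(rt i)) ∨ (∃ i, ⇑w = -⇑(rt i)))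
    (hx : ∀ i, x i ∈ rootSpace H ⇑(rt i)) (hx0 : ∀ i, x i ≠ 0)
    (hy : ∀ i, y i ∈ rootSpace H (-⇑(rt i))) (hy0 : ∀ i, y i ≠ 0)
    {n : ℕ} (hS : SortedSandwichesMem (pbwSpan rt x y) y n) {l : List (Fin s)}
    (hl : l.Pairwise (· ≤ ·)) (hlen : l.length ≤ n) (z : L) :
    wordProd K y l * ι K z ∈ pbwSpan rt x y := by
  have hz : z ∈ ⨆ χ : H → K, rootSpace H χ := by
    rw [iSup_genWeightSpace_eq_top K H L]; trivial
  refine LieSubmodule.iSup_induction _ (motive := (wordProd K y l * ι K · ∈ pbwSpan rt x y)) hz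
    ?_ (by simp) fun _ _ h₁ h₂ => by simpa [mul_add] using add_mem h₁ h₂
  intro χ z hz
  by_cases hχ : χ = 0
  · subst hχ
    rw [rootSpace_zero_eq] at hz
    exact wordProd_mul_ι_cartan_mem_pbwSpan hpos hl ⟨z, hz⟩
  by_cases hbot : rootSpace H χ = ⊥
  · rw [hbot] at hz
    simp [show z = 0 by simpa using hz]
  let α : Weight K H L := ⟨χ, hbot⟩
  rcases hpos α hχ with ⟨k, hk⟩ | ⟨m, hm⟩
  · obtain ⟨c, rfl⟩ := exists_smul_eq_of_mem_rootSpace (α := α) hχ (hk ▸ hx k) (hx0 k) hz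
    rw [map_smul, mul_smul_comm, ← wordProd_singleton (R := K) x k]
    exact (pbwSpan rt x y).smul_mem c
      (wordProd_mul_wordProd_mem_pbwSpan hl (List.pairwise_singleton _ k))
  · obtain ⟨c, rfl⟩ := exists_smul_eq_of_mem_rootSpace (α := α) hχ (hm ▸ hy m) (hy0 m) hz
    rw [map_smul, mul_smul_comm]
    exact (pbwSpan rt x y).smul_mem c (hS.wordProd_mul_ι_letter_mem_pbwSpan hl hlen m)

theorem sortedSandwichesMem_pbwSpan
    (hpos : ∀ w : Weight K H L, w.IsNonZero → (∃ i, ⇑w = ⇑(rt i)) ∨ (∃ i, ⇑w = -⇑(rt i)))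
    (hx : ∀ i, x i ∈ rootSpace H ⇑(rt i)) (hx0 : ∀ i, x i ≠ 0)
    (hy : ∀ i, y i ∈ rootSpace H (-⇑(rt i))) (hy0 : ∀ i, y i ≠ 0) (n : ℕ) :
    SortedSandwichesMem (pbwSpan rt x y) y n := by
  induction n with
  | zero => exact fun _ _ _ h => absurd h (Nat.not_lt_zero _)
  | succ n hS =>
    intro a c hac hlen z
    have hslide := hS.wordProd_append_mul_sub_mem (a := a) (b := c) (c := [])
      (by simpa using hac) (by simpa [Nat.lt_succ_iff] using hlen) z
    rw [wordProd_nil, mul_one] at hslide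
    have hend := hS.wordProd_mul_ι_mem_pbwSpan hpos hx hx0 hy hy0 hac
      (Nat.lt_succ_iff.1 hlen) z
    simpa using (pbwSpan rt x y).sub_mem hend hslide

end Killing

end UniversalEnvelopingAlgebra

theorem xpos_mul_Xneg_mem_span_general
    (L : Type*) [LieRing L] [LieAlgebra ℂ L] [FiniteDimensional ℂ L]
    [LieAlgebra.IsKilling ℂ L]
    (H : LieSubalgebra ℂ L) [H.IsCartanSubalgebra]
    (s : ℕ) (rt : Fin s → LieModule.Weight ℂ H L)
    -- `rt` enumerates a system of positive roots: every root is `± rt i` …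
    (hpos : ∀ w : LieModule.Weight ℂ H L, w.IsNonZero →
      (∃ i, ⇑w = ⇑(rt i)) ∨ (∃ i, ⇑w = -⇑(rt i)))
    -- the chosen nonzero root vectors
    (x : Fin s → L) (hx : ∀ i, x i ∈ rootSpace H ⇑(rt i)) (hx0 : ∀ i, x i ≠ 0)
    (y : Fin s → L) (hy : ∀ i, y i ∈ rootSpace H (-⇑(rt i))) (hy0 : ∀ i, y i ≠ 0)
    (i₀ : Fin s) (n : Fin s → ℕ) :
    (UniversalEnvelopingAlgebra.ι ℂ (x i₀)) *
        ((List.finRange s).map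
          (fun i => (UniversalEnvelopingAlgebra.ι ℂ (y i) :
              UniversalEnvelopingAlgebra ℂ L) ^ n i)).prod ∈
      Submodule.span ℂ
        ({ u : UniversalEnvelopingAlgebra ℂ L |
            ∃ a b : Fin s → ℕ,
              u = ((List.finRange s).map
                    (fun i => (UniversalEnvelopingAlgebra.ι ℂ (y i) :
                        UniversalEnvelopingAlgebra ℂ L) ^ a i)).prod *
                  ((List.finRange s).map
                    (fun i => (UniversalEnvelopingAlgebra.ι ℂ (x i) :
                        UniversalEnvelopingAlgebra ℂ L) ^ b i)).prod } ∪
         { u : UniversalEnvelopingAlgebra ℂ L |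
            ∃ (a : Fin s → ℕ) (j : Fin s),
              u = ((List.finRange s).map
                    (fun i => (UniversalEnvelopingAlgebra.ι ℂ (y i) :
                        UniversalEnvelopingAlgebra ℂ L) ^ a i)).prod *
                  UniversalEnvelopingAlgebra.ι ℂ
                    ((LieAlgebra.IsKilling.coroot (rt j) : H) : L) }) := by
  set w := (List.finRange s).flatMap fun i => List.replicate (n i) i
  have h := UniversalEnvelopingAlgebra.sortedSandwichesMem_pbwSpan hpos hx hx0 hy hy0
    (w.length + 1) [] w (List.pairwise_le_flatMap_finRange_replicate n) (Nat.lt_succ_self _)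
    (x i₀)
  rwa [UniversalEnvelopingAlgebra.wordProd_nil, one_mul, UniversalEnvelopingAlgebra.wordProd,
    ← List.prod_map_finRange_pow] at h

/-- (3.1.1) Let `𝔤` be a complex semisimple Lie algebra with Cartan subalgebra `H`,
`α_1, …, α_s` an enumeration of the positive roots `Φ⁺` of a system of positive roots,
`x_i ≠ 0` a root vector for `α_i` and `y_i ≠ 0` a root vector for `-α_i`, and
`h_γ` the coroot of a root `γ`.  For a multi-index `n` write
`X₋^{·n} = y_1^{n_1} ⋯ y_s^{n_s}` and `X₊^{·n} = x_1^{n_1} ⋯ x_s^{n_s}` inside the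
universal enveloping algebra `𝒰`.  Then for every positive root `α = α_{i₀}` and any
`n`, the element `x_α · X₋^{·n}` lies in the `ℂ`-span of the elements
`X₋^{·a} X₊^{·b}` together with the elements `X₋^{·a} h_γ`, `γ ∈ Φ⁺`. -/
theorem xpos_mul_Xneg_mem_span
    (L : Type*) [LieRing L] [LieAlgebra ℂ L] [FiniteDimensional ℂ L]
    [LieAlgebra.IsKilling ℂ L]
    (H : LieSubalgebra ℂ L) [H.IsCartanSubalgebra]
    (s : ℕ) (rt : Fin s → LieModule.Weight ℂ H L)
    (hnz : ∀ i, (rt i).IsNonZero)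
    -- `rt` enumerates a system of positive roots: every root is `± rt i` …
    (hpos : ∀ w : LieModule.Weight ℂ H L, w.IsNonZero →
      (∃ i, ⇑w = ⇑(rt i)) ∨ (∃ i, ⇑w = -⇑(rt i)))
    -- … and no `rt i` is the negative of another
    (hdist : ∀ i j, ⇑(rt i) ≠ -⇑(rt j))
    -- the chosen nonzero root vectors
    (x : Fin s → L) (hx : ∀ i, x i ∈ rootSpace H ⇑(rt i)) (hx0 : ∀ i, x i ≠ 0)
    (y : Fin s → L) (hy : ∀ i, y i ∈ rootSpace H (-⇑(rt i))) (hy0 : ∀ i, y i ≠ 0)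
    (i₀ : Fin s) (n : Fin s → ℕ) :
    (UniversalEnvelopingAlgebra.ι ℂ (x i₀)) *
        ((List.finRange s).map
          (fun i => (UniversalEnvelopingAlgebra.ι ℂ (y i) :
              UniversalEnvelopingAlgebra ℂ L) ^ n i)).prod ∈
      Submodule.span ℂ
        ({ u : UniversalEnvelopingAlgebra ℂ L |
            ∃ a b : Fin s → ℕ,
              u = ((List.finRange s).map
                    (fun i => (UniversalEnvelopingAlgebra.ι ℂ (y i) :
                        UniversalEnvelopingAlgebra ℂ L) ^ a i)).prod *
                  ((List.finRange s).map
                    (fun i => (UniversalEnvelopingAlgebra.ι ℂ (x i) :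
                        UniversalEnvelopingAlgebra ℂ L) ^ b i)).prod } ∪
         { u : UniversalEnvelopingAlgebra ℂ L |
            ∃ (a : Fin s → ℕ) (j : Fin s),
              u = ((List.finRange s).map
                    (fun i => (UniversalEnvelopingAlgebra.ι ℂ (y i) :
                        UniversalEnvelopingAlgebra ℂ L) ^ a i)).prod *
                  UniversalEnvelopingAlgebra.ι ℂ
                    ((LieAlgebra.IsKilling.coroot (rt j) : H) : L) }) :=
  xpos_mul_Xneg_mem_span_general L H s rt hpos x hx hx0 y hy hy0 i₀ n
end

section
/- Let V be a finite-dimensional ℚ_p-vector space, T : V → V a ℚ_p-linear map with characteristic polynomial m(X) ∈ ℚ_p[X], and α ∈ ℚ. Then the polynomial m_α(X) = ∏_{μ : v_p(μ) ≠ α} (X − μ) (product over the roots μ of m in an algebraic closure of ℚ_p, counted with multiplicity, whose valuation is not α) has coefficients in ℚ_p; the subspace V^α := m_α(T)(V) is T-invariant; every root of the characteristic polynomial of the restriction of T to V^α has p-adic valuation equal to α; and dim_{ℚ_p} V^α equals the number of roots μ of m(X) with v_p(μ) = α, counted with multiplicity. -/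
open Polynomial
open scoped Classical

/-!
The valuation of a root of the characteristic polynomial `m` depends only on its minimal
polynomial over `ℚ_p`, so grouping the monic irreducible factors of `m` by the valuation of
their roots gives a factorization `m = q * r` over `ℚ_p` with `q` mapping to `m_α` and `r`
collecting the factors whose roots have valuation `α`. As `q` and `r` are coprime and
`(q * r)(T) = 0`, we get `V = q(T)(V) ⊕ r(T)(V)` with `q(T)(V) = ker r(T)`. The characteristic
polynomial of `T` is the product of those of the two restrictions, whose roots are roots of `r`
and of `q` respectively; hence the roots of valuation `α` are exactly the roots of the first
factor, and their number is its degree `dim V^α`.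
-/

lemma padicValExt_eq_of_minpoly_eq {p : ℕ} [Fact p.Prime] {μ ν : AlgebraicClosure ℚ_[p]}
    (h : minpoly ℚ_[p] μ = minpoly ℚ_[p] ν) : padicValExt p μ = padicValExt p ν := by
  have eq_zero_of_eq_zero : ∀ {x y : AlgebraicClosure ℚ_[p]},
      minpoly ℚ_[p] x = minpoly ℚ_[p] y → x = 0 → y = 0 := fun {_ y} hxy hx => by
    simpa [← hxy, hx] using minpoly.aeval ℚ_[p] y
  simp only [padicValExt, h, eq_iff_iff.mpr ⟨eq_zero_of_eq_zero h, eq_zero_of_eq_zero h.symm⟩]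

namespace Polynomial

lemma roots_filter_eq_of_mul_eq {R : Type*} [CommRing R] [IsDomain R] {f g h : R[X]}
    (hgh : g * h = f) (hf : f ≠ 0) {P : R → Prop} [DecidablePred P]
    (hg : ∀ μ ∈ g.roots, P μ) (hh : ∀ μ ∈ h.roots, ¬ P μ) : f.roots.filter P = g.roots := by
  subst hgh
  rw [roots_mul hf, Multiset.filter_add, Multiset.filter_eq_self.mpr hg,
    Multiset.filter_eq_nil.mpr hh, add_zero]

variable {K L : Type*} [Field K] [Field L] [Algebra K L]

lemma exists_mem_aeval_eq_zero_of_mem_roots_map_prod {s : Multiset K[X]} {μ : L}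
    (hμ : μ ∈ (s.prod.map (algebraMap K L)).roots) : ∃ g ∈ s, aeval μ g = 0 := by
  have h := (mem_roots'.mp hμ).2
  rw [IsRoot, eval_map_algebraMap, map_multiset_prod, Multiset.prod_eq_zero_iff,
    Multiset.mem_map] at h
  exact h

lemma Monic.exists_mul_eq_of_minpoly_invariant [IsAlgClosed L] {f : K[X]} (hf : f.Monic)
    (P : L → Prop) (hP : ∀ μ ν : L, minpoly K μ = minpoly K ν → P μ → P ν) :
    ∃ q r : K[X], q.Monic ∧ r.Monic ∧ q * r = f ∧
      (∀ μ ∈ (q.map (algebraMap K L)).roots, ¬ P μ) ∧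
      ∀ μ ∈ (r.map (algebraMap K L)).roots, P μ := by
  set fs := UniqueFactorizationMonoid.normalizedFactors f
  have irreducible_monic : ∀ g ∈ fs, Irreducible g ∧ g.Monic := fun g hg =>
    ((Polynomial.mem_normalizedFactors_iff hf.ne_zero).mp hg).imp_right And.left
  have monic_prod : ∀ s ≤ fs, s.prod.Monic := fun s hs => by
    simpa using monic_multiset_prod_of_monic s id fun g hg =>
      (irreducible_monic g (Multiset.mem_of_le hs hg)).2
  set Q : K[X] → Prop := fun g => ∀ μ : L, aeval μ g = 0 → P μ
  -- all roots of an irreducible factor share its minimal polynomial, hence agree on `P`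
  have minpoly_eq {g : K[X]} {μ : L} (hg : g ∈ fs) (hμ : aeval μ g = 0) : minpoly K μ = g :=
    (minpoly.eq_of_irreducible_of_monic (irreducible_monic g hg).1 hμ
      (irreducible_monic g hg).2).symm
  refine ⟨(fs.filter (¬ Q ·)).prod, (fs.filter Q).prod, monic_prod _ (Multiset.filter_le _ _),
    monic_prod _ (Multiset.filter_le _ _), ?_, fun μ hμ hPμ => ?_, fun μ hμ => ?_⟩
  · rw [← Multiset.prod_add, add_comm, Multiset.filter_add_not,
      UniqueFactorizationMonoid.prod_normalizedFactors_eq hf.ne_zero, hf.normalize_eq_self]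
  · obtain ⟨g, hg, hgμ⟩ := exists_mem_aeval_eq_zero_of_mem_roots_map_prod hμ
    obtain ⟨hgfs, hQ⟩ := Multiset.mem_filter.mp hg
    exact hQ fun ν hν => hP μ ν ((minpoly_eq hgfs hgμ).trans (minpoly_eq hgfs hν).symm) hPμ
  · obtain ⟨g, hg, hgμ⟩ := exists_mem_aeval_eq_zero_of_mem_roots_map_prod hμ
    exact (Multiset.mem_filter.mp hg).2 μ hgμ

lemma isCoprime_of_forall_roots_map [IsAlgClosed L] {q r : K[X]} (hq : q ≠ 0) (hr : r ≠ 0)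
    {P : L → Prop} (hqP : ∀ μ ∈ (q.map (algebraMap K L)).roots, ¬ P μ)
    (hrP : ∀ μ ∈ (r.map (algebraMap K L)).roots, P μ) : IsCoprime q r := by
  refine (isCoprime_iff_aeval_ne_zero_of_isAlgClosed K L q r).mpr fun μ => ?_
  by_contra! h
  exact hqP μ ((mem_roots_map hq).mpr h.1) (hrP μ ((mem_roots_map hr).mpr h.2))

end Polynomial

namespace Module.End

section CommRing

variable {R V : Type*} [CommRing R] [AddCommGroup V] [Module R V] (T : Module.End R V)

lemma apply_mem_range_aeval (q : R[X]) :
    ∀ v ∈ LinearMap.range (aeval T q), T v ∈ LinearMap.range (aeval T q) := by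
  rintro _ ⟨y, rfl⟩
  have hcomm : Commute T (aeval T q) := by simpa using (Commute.all X q).map (aeval T)
  exact ⟨T y, by rw [← mul_apply, ← mul_apply, hcomm.eq]⟩

lemma coe_aeval_restrict_apply {W : Submodule R V} (hW : ∀ v ∈ W, T v ∈ W) (r : R[X]) (x : W) :
    (aeval (T.restrict hW) r x : V) = aeval T r x := by
  induction r using Polynomial.induction_on' with
  | add p q hp hq => simp [hp, hq]
  | monomial n a =>
    simp only [aeval_monomial, mul_apply, algebraMap_end_apply, Submodule.coe_smul]
    rw [pow_restrict]
    rfl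

variable {T} {q r : R[X]}

lemma range_aeval_le_ker_aeval (h : aeval T (q * r) = 0) :
    LinearMap.range (aeval T q) ≤ LinearMap.ker (aeval T r) := by
  rintro _ ⟨y, rfl⟩
  rw [LinearMap.mem_ker, ← mul_apply, ← map_mul, mul_comm, h, LinearMap.zero_apply]

lemma aeval_restrict_range_aeval_eq_zero (h : aeval T (q * r) = 0)
    (hq : ∀ v ∈ LinearMap.range (aeval T q), T v ∈ LinearMap.range (aeval T q)) :
    aeval (T.restrict hq) r = 0 :=
  LinearMap.ext fun x => Subtype.ext <| by
    rw [coe_aeval_restrict_apply, range_aeval_le_ker_aeval h x.2, LinearMap.zero_apply,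
      Submodule.coe_zero]

lemma range_aeval_eq_ker_aeval (hqr : IsCoprime q r) (h : aeval T (q * r) = 0) :
    LinearMap.range (aeval T q) = LinearMap.ker (aeval T r) := by
  refine (range_aeval_le_ker_aeval h).antisymm fun x hx => ?_
  obtain ⟨a, b, hab⟩ := hqr
  refine ⟨aeval T a x, ?_⟩
  calc aeval T q (aeval T a x) = aeval T (a * q) x + aeval T b (aeval T r x) := by
        rw [LinearMap.mem_ker.mp hx, map_zero, add_zero, mul_comm, map_mul, mul_apply]
    _ = x := by
        rw [← mul_apply, ← map_mul, ← LinearMap.add_apply, ← map_add, hab, map_one, one_apply]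

lemma isCompl_range_aeval (hqr : IsCoprime q r) (h : aeval T (q * r) = 0) :
    IsCompl (LinearMap.range (aeval T q)) (LinearMap.range (aeval T r)) := by
  rw [range_aeval_eq_ker_aeval hqr h, range_aeval_eq_ker_aeval hqr.symm (by rwa [mul_comm])]
  refine ⟨disjoint_ker_aeval_of_isCoprime T hqr.symm, codisjoint_iff.mpr ?_⟩
  rw [sup_ker_aeval_eq_ker_aeval_mul_of_coprime T hqr.symm, mul_comm, h, LinearMap.ker_zero]

end CommRing

section Field

variable {K V : Type*} [Field K] [AddCommGroup V] [Module K V] [FiniteDimensional K V]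
  (T : Module.End K V)

lemma charpoly_eq_mul_of_isCompl {U W : Submodule K V} (hUW : IsCompl U W)
    (hU : ∀ v ∈ U, T v ∈ U) (hW : ∀ v ∈ W, T v ∈ W) :
    T.charpoly = (T.restrict hU).charpoly * (T.restrict hW).charpoly := by
  let e := Submodule.prodEquivOfIsCompl U W hUW
  have hcomp : T ∘ₗ e = e ∘ₗ (T.restrict hU).prodMap (T.restrict hW) := by
    ext x <;> simp [e]
  have hconj : e.conj ((T.restrict hU).prodMap (T.restrict hW)) = T := by
    rw [LinearEquiv.conj_apply, ← hcomp, LinearMap.comp_assoc, LinearEquiv.comp_coe,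
      e.symm_trans_self, LinearEquiv.refl_toLinearMap, LinearMap.comp_id]
  rw [← LinearMap.charpoly_prodMap, ← e.charpoly_conj, hconj]

lemma isRoot_map_of_isRoot_charpoly_map {L : Type*} [Field L] [Algebra K L] {r : K[X]}
    (hr : aeval T r = 0) {μ : L} (hμ : (T.charpoly.map (algebraMap K L)).IsRoot μ) :
    (r.map (algebraMap K L)).IsRoot μ := by
  rw [← LinearMap.charpoly_baseChange, ← hasEigenvalue_iff_isRoot_charpoly] at hμ
  obtain ⟨v, hv⟩ := hμ.exists_hasEigenvector
  have hrL : aeval (T.baseChange L) r = 0 := by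
    rw [show T.baseChange L = baseChangeHom K L V T from rfl, aeval_algHom_apply, hr, map_zero]
  have h := aeval_apply_of_hasEigenvector (p := r.map (algebraMap K L)) hv
  rw [aeval_map_algebraMap, hrL, LinearMap.zero_apply, eq_comm, smul_eq_zero] at h
  exact h.resolve_right hv.2

lemma mem_roots_map_of_mem_roots_charpoly_restrict_range {L : Type*} [Field L] [Algebra K L]
    {q r : K[X]} (hr : r ≠ 0) (h : aeval T (q * r) = 0)
    (hq : ∀ v ∈ LinearMap.range (aeval T q), T v ∈ LinearMap.range (aeval T q)) {μ : L}
    (hμ : μ ∈ ((T.restrict hq).charpoly.map (algebraMap K L)).roots) :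
    μ ∈ (r.map (algebraMap K L)).roots :=
  (mem_roots (Polynomial.map_ne_zero hr)).mpr <| isRoot_map_of_isRoot_charpoly_map _
    (aeval_restrict_range_aeval_eq_zero h hq) (isRoot_of_mem_roots hμ)

end Field

end Module.End

/-- Let `V` be a finite-dimensional `ℚ_p`-vector space, `T : V → V` linear with
characteristic polynomial `m`, and `α ∈ ℚ`. Then `m_α(X) = ∏_{v_p(μ) ≠ α} (X - μ)`
(over the roots of `m` in an algebraic closure, with multiplicity) has coefficients in
`ℚ_p`; the subspace `V^α = m_α(T)(V)` is `T`-invariant; every root of the characteristic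
polynomial of `T` restricted to `V^α` has valuation `α`; and `dim V^α` is the number of
roots `μ` of `m` with `v_p(μ) = α`, with multiplicity. -/
theorem slope_subspace_properties (p : ℕ) [Fact p.Prime]
    (V : Type*) [AddCommGroup V] [Module ℚ_[p] V] [FiniteDimensional ℚ_[p] V]
    (T : V →ₗ[ℚ_[p]] V) (α : ℚ)
    (mα : Polynomial (AlgebraicClosure ℚ_[p]))
    (hmα : mα = (((T.charpoly.map (algebraMap ℚ_[p] (AlgebraicClosure ℚ_[p]))).roots.filter
        (fun μ => padicValExt p μ ≠ (α : WithTop ℚ))).map (fun μ => X - C μ)).prod) :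
    (∃ q : Polynomial ℚ_[p], q.map (algebraMap ℚ_[p] (AlgebraicClosure ℚ_[p])) = mα) ∧
    ∀ q : Polynomial ℚ_[p], q.map (algebraMap ℚ_[p] (AlgebraicClosure ℚ_[p])) = mα →
      (∀ v ∈ LinearMap.range (aeval T q), T v ∈ LinearMap.range (aeval T q)) ∧
      ∀ hinv : ∀ v ∈ LinearMap.range (aeval T q), T v ∈ LinearMap.range (aeval T q),
        (∀ μ ∈ ((T.restrict hinv).charpoly.map
            (algebraMap ℚ_[p] (AlgebraicClosure ℚ_[p]))).roots,
          padicValExt p μ = (α : WithTop ℚ)) ∧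
        Module.finrank ℚ_[p] (LinearMap.range (aeval T q)) =
          Multiset.card ((T.charpoly.map (algebraMap ℚ_[p] (AlgebraicClosure ℚ_[p]))).roots.filter
            (fun μ => padicValExt p μ = (α : WithTop ℚ))) := by
  set φ := algebraMap ℚ_[p] (AlgebraicClosure ℚ_[p])
  obtain ⟨q, r, hq, hr, hqr, hq_roots, hr_roots⟩ :=
    T.charpoly_monic.exists_mul_eq_of_minpoly_invariant (fun μ => padicValExt p μ = α)
      fun μ ν h hμ => (padicValExt_eq_of_minpoly_eq h).symm.trans hμ
  have hann : aeval T (q * r) = 0 := by rw [hqr, LinearMap.aeval_self_charpoly]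
  have hcop : IsCoprime q r :=
    isCoprime_of_forall_roots_map hq.ne_zero hr.ne_zero hq_roots hr_roots
  have hqmα : q.map φ = mα := by
    rw [hmα, roots_filter_eq_of_mul_eq (by rw [← Polynomial.map_mul, hqr])
      (T.charpoly_monic.map φ).ne_zero hq_roots fun μ hμ h => h (hr_roots μ hμ)]
    exact (IsAlgClosed.splits _).eq_prod_roots_of_monic (hq.map φ)
  refine ⟨⟨q, hqmα⟩, fun q' hq' => ?_⟩
  obtain rfl : q = q' := map_injective φ φ.injective (hqmα.trans hq'.symm)
  refine ⟨Module.End.apply_mem_range_aeval T q, fun hinv => ?_⟩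
  have hinvr := Module.End.apply_mem_range_aeval T r
  have hroots_q : ∀ μ ∈ ((T.restrict hinv).charpoly.map φ).roots, padicValExt p μ = α :=
    fun μ hμ => hr_roots μ <|
      Module.End.mem_roots_map_of_mem_roots_charpoly_restrict_range T hr.ne_zero hann hinv hμ
  have hroots_r : ∀ μ ∈ ((T.restrict hinvr).charpoly.map φ).roots, padicValExt p μ ≠ α :=
    fun μ hμ => hq_roots μ <| Module.End.mem_roots_map_of_mem_roots_charpoly_restrict_range T
      hq.ne_zero (by rwa [mul_comm]) hinvr hμ
  refine ⟨hroots_q, ?_⟩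
  rw [roots_filter_eq_of_mul_eq (by rw [Module.End.charpoly_eq_mul_of_isCompl T
      (Module.End.isCompl_range_aeval hcop hann) hinv hinvr, Polynomial.map_mul])
    (T.charpoly_monic.map φ).ne_zero hroots_q hroots_r,
    ← (IsAlgClosed.splits _).natDegree_eq_card_roots, natDegree_map, LinearMap.charpoly_natDegree]
end
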